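/- For every real α with 0 < α < 1 and every integer b ≥ 1, setting q := α^b e^{(1−α)b} (which satisfies 0 < q < 1), the series Σ_{ℓ=1}^{∞} ((ℓαb)^{ℓb}/(ℓb−1)!) · ∫_0^1 t (1−t)^{ℓb−1} e^{ℓαb(t−1)} dt converges and is at most q/(1−q) = α^b e^{(1−α)b} / (1 − α^b e^{(1−α)b}). -/

import Mathlib

/-!
With `n = ℓb` and `x = ℓαb`, the `ℓ`-th term is `x^n/(n-1)! · ∫₀¹ t(1-t)^{n-1} e^{x(t-1)} dt`.
Since `x ≤ n`, we have `e^{x(t-1)} ≤ e^{n-x} e^{n(t-1)}` on `[0, 1]`, and with the exponent `n` the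
integrand has the explicit antiderivative `-(1-t)^n e^{n(t-1)}/n`, so the term is at most
`x^n e^{-x}/n!`. The bound `n^n/n! ≤ e^n` turns this into `(α e^{1-α})^{ℓb} = q^ℓ`, and
`α e^{1-α} < 1` because `α < e^{α-1}` for `α ≠ 1`. Summing the geometric series gives `q/(1-q)`.
-/

open Real

noncomputable def waitingTerm (x : ℝ) (n : ℕ) : ℝ :=
  x ^ n / (n - 1).factorial * ∫ t in (0 : ℝ)..1, t * (1 - t) ^ (n - 1) * exp (x * (t - 1))

theorem waitingTerm_nonneg {x : ℝ} (hx : 0 ≤ x) (n : ℕ) : 0 ≤ waitingTerm x n := by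
  refine mul_nonneg (by positivity) (intervalIntegral.integral_nonneg zero_le_one ?_)
  rintro t ⟨ht0, ht1⟩
  have : 0 ≤ 1 - t := by linarith
  positivity

theorem hasDerivAt_one_sub_pow_mul_exp {n : ℕ} (hn : n ≠ 0) (t : ℝ) :
    HasDerivAt (fun t => -((1 - t) ^ n * exp (n * (t - 1))) / n)
      (t * (1 - t) ^ (n - 1) * exp (n * (t - 1))) t := by
  have hpow : HasDerivAt (fun t : ℝ => (1 - t) ^ n) (n * (1 - t) ^ (n - 1) * -1) t :=
    ((hasDerivAt_id t).const_sub 1).pow n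
  have hexp : HasDerivAt (fun t : ℝ => exp (n * (t - 1))) (exp (n * (t - 1)) * (n * 1)) t :=
    (((hasDerivAt_id t).sub_const 1).const_mul (n : ℝ)).exp
  refine (((hpow.mul hexp).neg).div_const (n : ℝ)).congr_deriv ?_
  have hsucc : (1 - t) ^ n = (1 - t) ^ (n - 1) * (1 - t) := by
    rw [← pow_succ, Nat.sub_add_cancel (Nat.one_le_iff_ne_zero.mpr hn)]
  rw [hsucc]
  field_simp
  ring

theorem integral_mul_one_sub_pow_mul_exp {n : ℕ} (hn : n ≠ 0) :
    ∫ t in (0 : ℝ)..1, t * (1 - t) ^ (n - 1) * exp (n * (t - 1)) = exp (-n) / n := by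
  rw [intervalIntegral.integral_eq_sub_of_hasDerivAt
    (fun t _ => hasDerivAt_one_sub_pow_mul_exp hn t) (Continuous.intervalIntegrable (by fun_prop) _ _)]
  simp [zero_pow hn, neg_div]

theorem integral_mul_one_sub_pow_mul_exp_le {n : ℕ} (hn : n ≠ 0) {x : ℝ} (hx : x ≤ n) :
    ∫ t in (0 : ℝ)..1, t * (1 - t) ^ (n - 1) * exp (x * (t - 1)) ≤ exp (-x) / n := by
  have hpointwise : ∀ t ∈ Set.Icc (0 : ℝ) 1, t * (1 - t) ^ (n - 1) * exp (x * (t - 1)) ≤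
      exp (n - x) * (t * (1 - t) ^ (n - 1) * exp (n * (t - 1))) := by
    rintro t ⟨ht0, ht1⟩
    rw [mul_left_comm, ← exp_add]
    gcongr
    nlinarith [mul_le_mul_of_nonneg_left hx ht0]
  calc ∫ t in (0 : ℝ)..1, t * (1 - t) ^ (n - 1) * exp (x * (t - 1))
      ≤ ∫ t in (0 : ℝ)..1, exp (n - x) * (t * (1 - t) ^ (n - 1) * exp (n * (t - 1))) :=
        intervalIntegral.integral_mono_on zero_le_one
          (Continuous.intervalIntegrable (by fun_prop) _ _)
          (Continuous.intervalIntegrable (by fun_prop) _ _) hpointwise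
    _ = exp (-x) / n := by
        rw [intervalIntegral.integral_const_mul, integral_mul_one_sub_pow_mul_exp hn,
          ← mul_div_assoc, ← exp_add]
        ring_nf

theorem waitingTerm_le {n : ℕ} (hn : n ≠ 0) {x : ℝ} (hx0 : 0 ≤ x) (hxn : x ≤ n) :
    waitingTerm x n ≤ x ^ n * exp (-x) / n.factorial := by
  have hfact : (n : ℝ) * (n - 1).factorial = n.factorial := by
    exact_mod_cast Nat.mul_factorial_pred hn
  calc waitingTerm x n ≤ x ^ n / (n - 1).factorial * (exp (-x) / n) := by
        unfold waitingTerm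
        gcongr
        exact integral_mul_one_sub_pow_mul_exp_le hn hxn
    _ = x ^ n * exp (-x) / n.factorial := by
        rw [← hfact]
        field_simp

theorem mul_pow_mul_exp_neg_div_factorial_le {α : ℝ} (hα : 0 ≤ α) (n : ℕ) :
    (α * n) ^ n * exp (-(α * n)) / n.factorial ≤ (α * exp (1 - α)) ^ n :=
  calc (α * n) ^ n * exp (-(α * n)) / n.factorial
      = α ^ n * exp (-(α * n)) * ((n : ℝ) ^ n / n.factorial) := by ring
    _ ≤ α ^ n * exp (-(α * n)) * exp n := by
        gcongr
        exact pow_div_factorial_le_exp _ (Nat.cast_nonneg n) n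
    _ = (α * exp (1 - α)) ^ n := by
        rw [mul_pow, ← exp_nat_mul, mul_assoc, ← exp_add]
        ring_nf

theorem mul_exp_one_sub_lt_one {α : ℝ} (hα : α ≠ 1) : α * exp (1 - α) < 1 :=
  calc α * exp (1 - α) < exp (α - 1) * exp (1 - α) := by
        gcongr
        linarith [add_one_lt_exp (sub_ne_zero.mpr hα)]
    _ = 1 := by rw [← exp_add]; simp

theorem summable_and_tsum_le_of_le_pow_succ {f : ℕ → ℝ} {r : ℝ} (hr0 : 0 ≤ r) (hr1 : r < 1)
    (hf0 : ∀ l, 0 ≤ f l) (hfr : ∀ l, f l ≤ r ^ (l + 1)) :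
    Summable f ∧ ∑' l, f l ≤ r / (1 - r) := by
  have hgeom : HasSum (fun l : ℕ => r ^ (l + 1)) (r / (1 - r)) := by
    simpa [pow_succ', div_eq_mul_inv] using (hasSum_geometric_of_lt_one hr0 hr1).mul_left r
  have hf : Summable f := hgeom.summable.of_nonneg_of_le hf0 hfr
  exact ⟨hf, hf.tsum_le_tsum hfr hgeom.summable |>.trans_eq hgeom.tsum_eq⟩

/-- For every real `α` with `0 < α < 1` and every integer `b ≥ 1`, setting
`q := α^b e^{(1−α)b}` (which satisfies `0 < q < 1`), the series
`Σ_{ℓ=1}^{∞} ((ℓαb)^{ℓb}/(ℓb−1)!) · ∫_0^1 t (1−t)^{ℓb−1} e^{ℓαb(t−1)} dt`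
converges and is at most `q/(1−q) = α^b e^{(1−α)b}/(1 − α^b e^{(1−α)b})`. -/
theorem queue_waiting_time_series_bound (α : ℝ) (hα0 : 0 < α) (hα1 : α < 1)
    (b : ℕ) (hb : 1 ≤ b) :
    (0 < α ^ b * Real.exp ((1 - α) * (b : ℝ)) ∧
        α ^ b * Real.exp ((1 - α) * (b : ℝ)) < 1) ∧
      Summable (fun l : ℕ =>
        (((l + 1 : ℕ) : ℝ) * α * (b : ℝ)) ^ ((l + 1) * b) /
            (Nat.factorial ((l + 1) * b - 1)) *
          ∫ t in (0 : ℝ)..1, t * (1 - t) ^ ((l + 1) * b - 1) *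
            Real.exp (((l + 1 : ℕ) : ℝ) * α * (b : ℝ) * (t - 1))) ∧
      (∑' l : ℕ,
          (((l + 1 : ℕ) : ℝ) * α * (b : ℝ)) ^ ((l + 1) * b) /
              (Nat.factorial ((l + 1) * b - 1)) *
            ∫ t in (0 : ℝ)..1, t * (1 - t) ^ ((l + 1) * b - 1) *
              Real.exp (((l + 1 : ℕ) : ℝ) * α * (b : ℝ) * (t - 1))) ≤
        α ^ b * Real.exp ((1 - α) * (b : ℝ)) /
          (1 - α ^ b * Real.exp ((1 - α) * (b : ℝ))) := by
  have hq : α ^ b * exp ((1 - α) * b) = (α * exp (1 - α)) ^ b := by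
    rw [mul_pow, ← exp_nat_mul, mul_comm (b : ℝ)]
  have hq1 : (α * exp (1 - α)) ^ b < 1 :=
    pow_lt_one₀ (by positivity) (mul_exp_one_sub_lt_one hα1.ne) (by omega)
  have hterm : ∀ l : ℕ, waitingTerm (((l + 1 : ℕ) : ℝ) * α * b) ((l + 1) * b) ≤
      ((α * exp (1 - α)) ^ b) ^ (l + 1) := by
    intro l
    have hn : (l + 1) * b ≠ 0 := by positivity
    have hx : ((l + 1 : ℕ) : ℝ) * α * b = α * ((l + 1) * b : ℕ) := by push_cast; ring
    rw [hx, ← pow_mul, mul_comm b]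
    exact (waitingTerm_le hn (by positivity) (by nlinarith)).trans
      (mul_pow_mul_exp_neg_div_factorial_le hα0.le _)
  rw [hq]
  exact ⟨⟨by positivity, hq1⟩, summable_and_tsum_le_of_le_pow_succ (by positivity) hq1
    (fun l => waitingTerm_nonneg (by positivity) _) hterm⟩
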